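/- Percolation crossing duality on a rectangle: color each cell of an m×n grid (m,n ≥ 1) independently blue or yellow. Then in every coloring, exactly one of the following holds: (1) there is a path of blue cells (adjacent meaning sharing an edge) connecting the left edge to the right edge, or (2) there is a path of yellow cells (adjacency including diagonal/corner-sharing) connecting the top edge to the bottom edge. -/

import Mathlib

/-- Two cells of the grid (indexed by (column, row)) share an edge. -/
def EdgeAdj (p q : ℕ × ℕ) : Prop :=
  (p.1 = q.1 ∧ (p.2 = q.2 + 1 ∨ q.2 = p.2 + 1)) ∨
  (p.2 = q.2 ∧ (p.1 = q.1 + 1 ∨ q.1 = p.1 + 1))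

/-- Two distinct cells share an edge or a corner (*-adjacency). -/
def StarAdj (p q : ℕ × ℕ) : Prop :=
  p ≠ q ∧ p.1 ≤ q.1 + 1 ∧ q.1 ≤ p.1 + 1 ∧ p.2 ≤ q.2 + 1 ∧ q.2 ≤ p.2 + 1

/-- A cell lies in the m×n grid (columns 1..m, rows 1..n). -/
def InGrid (m n : ℕ) (p : ℕ × ℕ) : Prop :=
  1 ≤ p.1 ∧ p.1 ≤ m ∧ 1 ≤ p.2 ∧ p.2 ≤ n

/-- A blue (color = true) left–right crossing with edge-adjacency. -/
def BlueHorizCrossing (m n : ℕ) (color : ℕ × ℕ → Bool) : Prop :=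
  ∃ path : List (ℕ × ℕ), path ≠ [] ∧
    path.Chain' EdgeAdj ∧
    (∀ p ∈ path, InGrid m n p ∧ color p = true) ∧
    (path.head?.map Prod.fst) = some 1 ∧
    (path.getLast?.map Prod.fst) = some m

/-- A yellow (color = false) top–bottom crossing with *-adjacency. -/
def YellowVertCrossing (m n : ℕ) (color : ℕ × ℕ → Bool) : Prop :=
  ∃ path : List (ℕ × ℕ), path ≠ [] ∧
    path.Chain' StarAdj ∧
    (∀ p ∈ path, InGrid m n p ∧ color p = false) ∧
    (path.head?.map Prod.snd) = some 1 ∧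
    (path.getLast?.map Prod.snd) = some n

namespace CDaux
open Finset

/-- Parity telescoping: the number of indices `t < L` where a decidable
predicate `g` changes truth value between `t` and `t+1` has the parity of
`g 0 ≠ g L`. -/
lemma telescope (L : ℕ) (g : ℕ → Prop) [DecidablePred g] :
    ((range L).filter (fun t => ¬ (g t ↔ g (t+1)))).card % 2
      = (if g 0 ↔ g L then 0 else 1) := by
  induction L with
  | zero => simp
  | succ L ih =>
      rw [range_add_one, filter_insert]
      by_cases h : g L ↔ g (L+1)
      · rw [if_neg (by tauto)]
        rw [ih]
        by_cases h0 : g 0 ↔ g L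
        · rw [if_pos h0, if_pos (by tauto)]
        · rw [if_neg h0, if_neg (by tauto)]
      · rw [if_pos (by tauto), card_insert_of_notMem (by simp)]
        by_cases h0 : g 0 ↔ g L
        · rw [if_neg (by tauto)]
          rw [if_pos h0] at ih
          omega
        · rw [if_pos (by tauto)]
          rw [if_neg h0] at ih
          omega

section Core

variable (n : ℕ) (δ : ℕ → ℕ × ℕ) (L : ℕ)

/-- The step `t → t+1` of `δ` moves between rows `y-1` and `y`. -/
def matched (y t : ℕ) : Prop :=
  ((δ t).2 + 1 = y ∧ (δ (t+1)).2 = y) ∨ ((δ t).2 = y ∧ (δ (t+1)).2 + 1 = y)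

instance (y t : ℕ) : Decidable (matched δ y t) := by
  unfold matched; infer_instance

/-- Number of steps of `δ` crossing level `y - 1/2` strictly to the left of
column `x`. -/
def cnt (x y : ℕ) : ℕ :=
  ((range L).filter
    (fun t => matched δ y t ∧ (δ t).1 + (δ (t+1)).1 < 2 * x)).card

variable (hstar : ∀ t < L, StarAdj (δ t) (δ (t+1)))
  (hrow0 : (δ 0).2 = 0) (hrowL : (δ L).2 = n + 1)

include hstar hrow0 hrowL

/-- The total number of crossings of level `y - 1/2` is odd. -/
lemma total_odd (y : ℕ) (hy1 : 1 ≤ y) (hy2 : y ≤ n + 1) :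
    ((range L).filter (fun t => matched δ y t)).card % 2 = 1 := by
  have h := telescope L (fun t => (δ t).2 < y)
  have heq : ((range L).filter (fun t => ¬ ((δ t).2 < y ↔ (δ (t+1)).2 < y)))
      = ((range L).filter (fun t => matched δ y t)) := by
    refine filter_congr fun t ht => ?_
    obtain ⟨-, -, -, h3, h4⟩ := hstar t (mem_range.mp ht)
    unfold matched
    omega
  rw [heq] at h
  rw [h, if_neg (by omega)]

omit hrow0 hrowL in
/-- Crossings strictly left of column `x` vs column `x+1`: equal counts when
neither `(x,y)` nor `(x+1,y)` is a cell of `δ`. -/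
lemma cnt_succ_col (x y : ℕ)
    (hne : ∀ t ≤ L, δ t ≠ (x, y) ∧ δ t ≠ (x + 1, y)) :
    cnt δ L x y = cnt δ L (x + 1) y := by
  unfold cnt
  refine congrArg _ (filter_congr fun t ht => ?_)
  have htL := mem_range.mp ht
  obtain ⟨hne1, h1, h2, h3, h4⟩ := hstar t htL
  obtain ⟨ha1, ha2⟩ := hne t (le_of_lt htL)
  obtain ⟨hb1, hb2⟩ := hne (t+1) htL
  simp only [ne_eq, Prod.ext_iff, not_and_or] at ha1 ha2 hb1 hb2
  unfold matched
  omega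

/-- At column `m` (the right edge), all crossings are counted. -/
lemma cnt_right (m y : ℕ) (hy1 : 1 ≤ y) (hy2 : y ≤ n + 1)
    (hcolm : ∀ t ≤ L, (δ t).1 ≤ m)
    (hne : ∀ t ≤ L, δ t ≠ (m, y)) :
    cnt δ L m y % 2 = 1 := by
  unfold cnt
  have heq : ((range L).filter
        (fun t => matched δ y t ∧ (δ t).1 + (δ (t+1)).1 < 2 * m))
      = ((range L).filter (fun t => matched δ y t)) := by
    refine filter_congr fun t ht => ?_
    have htL := mem_range.mp ht
    obtain ⟨hne1, h1, h2, h3, h4⟩ := hstar t htL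
    have hc1 := hcolm t (le_of_lt htL)
    have hc2 := hcolm (t+1) htL
    have ha := hne t (le_of_lt htL)
    have hb := hne (t+1) htL
    simp only [ne_eq, Prod.ext_iff, not_and_or] at ha hb
    unfold matched
    omega
  rw [heq]
  exact total_odd n δ L hstar hrow0 hrowL y hy1 hy2

/-- Vertical neighbours have the same crossing parity. -/
lemma cnt_succ_row (x y : ℕ) (hy1 : 1 ≤ y) (hy2 : y ≤ n)
    (hne : ∀ t ≤ L, δ t ≠ (x, y) ∧ δ t ≠ (x, y + 1)) :
    cnt δ L x y % 2 = cnt δ L x (y + 1) % 2 := by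
  set A := cnt δ L x y with hA
  set C := cnt δ L x (y + 1) with hC
  set B := ((range L).filter
      (fun t => matched δ y t ∧ ¬ ((δ t).1 + (δ (t+1)).1 < 2 * x))).card with hB
  set D := ((range L).filter
      (fun t => matched δ (y+1) t ∧ ¬ ((δ t).1 + (δ (t+1)).1 < 2 * x))).card with hD
  have hAB : (A + B) % 2 = 1 := by
    have e1 : ((range L).filter (fun t => matched δ y t ∧ (δ t).1 + (δ (t+1)).1 < 2 * x))
        ∪ ((range L).filter (fun t => matched δ y t ∧ ¬ ((δ t).1 + (δ (t+1)).1 < 2 * x)))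
        = (range L).filter (fun t => matched δ y t) := by
      rw [← filter_or]
      refine filter_congr fun t ht => ?_
      constructor
      · rintro (⟨h, -⟩ | ⟨h, -⟩) <;> exact h
      · intro h
        by_cases hc : (δ t).1 + (δ (t+1)).1 < 2 * x
        · exact Or.inl ⟨h, hc⟩
        · exact Or.inr ⟨h, hc⟩
    have hd : Disjoint
        ((range L).filter (fun t => matched δ y t ∧ (δ t).1 + (δ (t+1)).1 < 2 * x))
        ((range L).filter (fun t => matched δ y t ∧ ¬ ((δ t).1 + (δ (t+1)).1 < 2 * x))) := by
      rw [Finset.disjoint_left]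
      intro a ha hb
      rw [mem_filter] at ha hb
      exact hb.2.2 ha.2.2
    have e2 := Finset.card_union_of_disjoint hd
    rw [e1] at e2
    rw [hA, hB]
    unfold cnt
    rw [← e2]
    exact total_odd n δ L hstar hrow0 hrowL y hy1 (by omega)
  have hCD : (C + D) % 2 = 1 := by
    have e1 : ((range L).filter (fun t => matched δ (y+1) t ∧ (δ t).1 + (δ (t+1)).1 < 2 * x))
        ∪ ((range L).filter (fun t => matched δ (y+1) t ∧ ¬ ((δ t).1 + (δ (t+1)).1 < 2 * x)))
        = (range L).filter (fun t => matched δ (y+1) t) := by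
      rw [← filter_or]
      refine filter_congr fun t ht => ?_
      constructor
      · rintro (⟨h, -⟩ | ⟨h, -⟩) <;> exact h
      · intro h
        by_cases hc : (δ t).1 + (δ (t+1)).1 < 2 * x
        · exact Or.inl ⟨h, hc⟩
        · exact Or.inr ⟨h, hc⟩
    have hd : Disjoint
        ((range L).filter (fun t => matched δ (y+1) t ∧ (δ t).1 + (δ (t+1)).1 < 2 * x))
        ((range L).filter (fun t => matched δ (y+1) t ∧ ¬ ((δ t).1 + (δ (t+1)).1 < 2 * x))) := by
      rw [Finset.disjoint_left]
      intro a ha hb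
      rw [mem_filter] at ha hb
      exact hb.2.2 ha.2.2
    have e2 := Finset.card_union_of_disjoint hd
    rw [e1] at e2
    rw [hC, hD]
    unfold cnt
    rw [← e2]
    exact total_odd n δ L hstar hrow0 hrowL (y+1) (by omega) (by omega)
  have hBC : (B + C) % 2 = 1 := by
    have h := telescope L (fun t => (δ t).2 < y ∨ ((δ t).2 = y ∧ (δ t).1 < x))
    rw [if_neg (by omega)] at h
    have e1 : ((range L).filter (fun t =>
          ¬ (((δ t).2 < y ∨ ((δ t).2 = y ∧ (δ t).1 < x))
            ↔ ((δ (t+1)).2 < y ∨ ((δ (t+1)).2 = y ∧ (δ (t+1)).1 < x)))))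
        = ((range L).filter (fun t => matched δ y t ∧ ¬ ((δ t).1 + (δ (t+1)).1 < 2 * x)))
          ∪ ((range L).filter (fun t => matched δ (y+1) t ∧ (δ t).1 + (δ (t+1)).1 < 2 * x)) := by
      rw [← filter_or]
      refine filter_congr fun t ht => ?_
      have htL := mem_range.mp ht
      obtain ⟨hne1, h1, h2, h3, h4⟩ := hstar t htL
      obtain ⟨ha1, ha2⟩ := hne t (le_of_lt htL)
      obtain ⟨hb1, hb2⟩ := hne (t+1) htL
      simp only [ne_eq, Prod.ext_iff, not_and_or] at ha1 ha2 hb1 hb2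
      unfold matched
      omega
    have hd : Disjoint
        ((range L).filter (fun t => matched δ y t ∧ ¬ ((δ t).1 + (δ (t+1)).1 < 2 * x)))
        ((range L).filter (fun t => matched δ (y+1) t ∧ (δ t).1 + (δ (t+1)).1 < 2 * x)) := by
      rw [Finset.disjoint_left]
      intro a ha hb
      rw [mem_filter] at ha hb
      have u1 := ha.2.1
      have u2 := hb.2.1
      unfold matched at u1 u2
      omega
    rw [e1, Finset.card_union_of_disjoint hd] at h
    rw [hB, hC]
    unfold cnt
    omega
  omega

omit hstar hrow0 hrowL in
/-- At column 1 (the left edge), no crossings are counted. -/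
lemma cnt_left (y : ℕ) (hcol : ∀ t ≤ L, 1 ≤ (δ t).1) :
    cnt δ L 1 y = 0 := by
  unfold cnt
  rw [Finset.card_eq_zero, Finset.filter_eq_empty_iff]
  intro t ht
  have htL := mem_range.mp ht
  have h1 := hcol t (le_of_lt htL)
  have h2 := hcol (t+1) htL
  rintro ⟨-, hlt⟩
  omega

end Core

section Assembly

/-- getD-facts extracted from a crossing list. -/
lemma list_getD_mem {α : Type*} (l : List α) (d : α) (i : ℕ) (hi : i < l.length) :
    l.getD i d ∈ l := by
  rw [List.getD_eq_getElem _ _ hi]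
  exact List.getElem_mem _

lemma list_getD_chain' {α : Type*} {R : α → α → Prop} {l : List α} (h : l.Chain' R)
    (d : α) (i : ℕ) (hi : i + 1 < l.length) :
    R (l.getD i d) (l.getD (i+1) d) := by
  have hh := List.isChain_iff_getElem.mp h i (by omega)
  rwa [List.getD_eq_getElem _ _ (by omega), List.getD_eq_getElem _ _ hi]

lemma list_getD_head {α : Type*} {l : List α} {a : α} (h : l.head? = some a) (d : α) :
    l.getD 0 d = a := by
  cases l with
  | nil => simp at h
  | cons b t => simp at h; simp [h]

lemma list_getD_last {α : Type*} {l : List α} {a : α} (h : l.getLast? = some a) (d : α) :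
    l.getD (l.length - 1) d = a := by
  cases l with
  | nil => simp at h
  | cons b t =>
      rw [List.getLast?_eq_getElem?] at h
      have hl : (b :: t).length - 1 < (b :: t).length := by simp
      rw [List.getElem?_eq_getElem hl] at h
      rw [List.getD_eq_getElem _ _ hl]
      exact Option.some_injective _ h

theorem not_both (m n : ℕ) (hm : 1 ≤ m) (hn : 1 ≤ n) (color : ℕ × ℕ → Bool)
    (hB : ∃ path : List (ℕ × ℕ), path ≠ [] ∧
      path.Chain' EdgeAdj ∧
      (∀ p ∈ path, InGrid m n p ∧ color p = true) ∧
      (path.head?.map Prod.fst) = some 1 ∧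
      (path.getLast?.map Prod.fst) = some m)
    (hY : ∃ path : List (ℕ × ℕ), path ≠ [] ∧
      path.Chain' StarAdj ∧
      (∀ p ∈ path, InGrid m n p ∧ color p = false) ∧
      (path.head?.map Prod.snd) = some 1 ∧
      (path.getLast?.map Prod.snd) = some n) : False := by
  obtain ⟨P, hPne, hPchain, hPmem, hPhead, hPlast⟩ := hB
  obtain ⟨Q, hQne, hQchain, hQmem, hQhead, hQlast⟩ := hY
  set p : ℕ → ℕ × ℕ := fun i => P.getD i (0,0) with hp
  set K := P.length - 1 with hK
  set q : ℕ → ℕ × ℕ := fun i => Q.getD i (0,0) with hq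
  set KQ := Q.length - 1 with hKQ
  have hPlen : K + 1 = P.length := by
    have := List.length_pos_iff.mpr hPne; omega
  have hQlen : KQ + 1 = Q.length := by
    have := List.length_pos_iff.mpr hQne; omega
  set a0 := (q 0).1 with ha0
  set al := (q KQ).1 with hal
  set δ : ℕ → ℕ × ℕ := fun t =>
    if t = 0 then (a0, 0) else if t ≤ KQ + 1 then q (t-1) else (al, n+1) with hδ
  set L := KQ + 2 with hL
  -- basic facts about q
  have hqmem : ∀ i ≤ KQ, q i ∈ Q := fun i hi => list_getD_mem Q (0,0) i (by omega)
  have hqadj : ∀ i < KQ, StarAdj (q i) (q (i+1)) :=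
    fun i hi => list_getD_chain' hQchain (0,0) i (by omega)
  have hq0 : (q 0).2 = 1 := by
    cases Q with
    | nil => simp at hQne
    | cons b t =>
        simp only [List.head?_cons, Option.map_some] at hQhead
        have : q 0 = b := list_getD_head (by simp) (0,0)
        rw [this]
        exact Option.some_injective _ hQhead
  have hqK : (q KQ).2 = n := by
    obtain ⟨a, hga⟩ : ∃ a, Q.getLast? = some a := by
      cases Q with
      | nil => simp at hQne
      | cons b t => exact ⟨_, List.getLast?_eq_getLast (by simp)⟩
    rw [hga, Option.map_some] at hQlast
    have h2 : q (Q.length - 1) = a := list_getD_last hga ((0:ℕ),(0:ℕ))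
    rw [hKQ, h2]
    exact Option.some_injective _ hQlast
  -- facts about p
  have hpmem : ∀ i ≤ K, p i ∈ P := fun i hi => list_getD_mem P (0,0) i (by omega)
  have hpadj : ∀ i < K, EdgeAdj (p i) (p (i+1)) :=
    fun i hi => list_getD_chain' hPchain (0,0) i (by omega)
  have hp0 : (p 0).1 = 1 := by
    cases P with
    | nil => simp at hPne
    | cons b t =>
        simp only [List.head?_cons, Option.map_some] at hPhead
        have : p 0 = b := list_getD_head (by simp) (0,0)
        rw [this]
        exact Option.some_injective _ hPhead
  have hpK : (p K).1 = m := by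
    obtain ⟨a, hga⟩ : ∃ a, P.getLast? = some a := by
      cases P with
      | nil => simp at hPne
      | cons b t => exact ⟨_, List.getLast?_eq_getLast (by simp)⟩
    rw [hga, Option.map_some] at hPlast
    have h2 : p (P.length - 1) = a := list_getD_last hga ((0:ℕ),(0:ℕ))
    rw [hK, h2]
    exact Option.some_injective _ hPlast
  -- δ values
  have hδ0 : δ 0 = (a0, 0) := by simp [hδ]
  have hδmid : ∀ t, 1 ≤ t → t ≤ KQ + 1 → δ t = q (t-1) := by
    intro t h1 h2
    simp only [hδ]
    rw [if_neg (by omega), if_pos h2]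
  have hδend : δ L = (al, n+1) := by
    simp only [hδ, hL]
    rw [if_neg (by omega), if_neg (by omega)]
  -- δ is a star chain
  have hstar : ∀ t < L, StarAdj (δ t) (δ (t+1)) := by
    intro t ht
    rcases Nat.eq_zero_or_pos t with h0 | h1
    · subst h0
      rw [hδ0, hδmid 1 le_rfl (by omega)]
      have hqq : q 0 = (a0, 1) := by
        rw [ha0]; exact Prod.ext rfl hq0
      simp only [Nat.sub_self]
      rw [hqq]
      refine ⟨?_, by omega, by omega, by omega, by omega⟩
      intro hcon
      have := congrArg Prod.snd hcon
      simp at this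
    · by_cases h2 : t ≤ KQ
      · rw [hδmid t h1 (by omega), hδmid (t+1) (by omega) (by omega)]
        have : t - 1 + 1 = t := by omega
        have hh := hqadj (t-1) (by omega)
        rwa [this] at hh
      · have ht' : t = KQ + 1 := by omega
        subst ht'
        rw [hδmid (KQ+1) (by omega) le_rfl, show KQ + 1 + 1 = L by omega, hδend]
        have hqq : q (KQ + 1 - 1) = (al, n) := by
          simp only [Nat.add_sub_cancel]
          rw [hal]; exact Prod.ext rfl hqK
        rw [hqq]
        refine ⟨?_, by omega, by omega, by omega, by omega⟩
        intro hcon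
        have := congrArg Prod.snd hcon
        simp at this
  have hrow0 : (δ 0).2 = 0 := by rw [hδ0]
  have hrowL : (δ L).2 = n + 1 := by rw [hδend]
  -- columns of δ are between 1 and m
  have hδcol : ∀ t ≤ L, 1 ≤ (δ t).1 ∧ (δ t).1 ≤ m := by
    intro t ht
    rcases Nat.eq_zero_or_pos t with h0 | h1
    · subst h0
      rw [hδ0]
      have := (hQmem _ (hqmem 0 (by omega))).1
      exact ⟨this.1, this.2.1⟩
    · by_cases h2 : t ≤ KQ + 1
      · rw [hδmid t h1 h2]
        have := (hQmem _ (hqmem (t-1) (by omega))).1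
        exact ⟨this.1, this.2.1⟩
      · have ht' : t = L := by omega
        subst ht'
        rw [hδend]
        have := (hQmem _ (hqmem KQ le_rfl)).1
        exact ⟨this.1, this.2.1⟩
  -- cells of δ avoid cells of P
  have hδnotP : ∀ c ∈ P, ∀ t ≤ L, δ t ≠ c := by
    intro c hc t ht
    have hcg := hPmem c hc
    rcases Nat.eq_zero_or_pos t with h0 | h1
    · subst h0
      rw [hδ0]
      intro hcon
      have := congrArg Prod.snd hcon
      simp only at this
      have := hcg.1.2.2.1
      omega
    · by_cases h2 : t ≤ KQ + 1
      · rw [hδmid t h1 h2]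
        intro hcon
        have hy := (hQmem _ (hqmem (t-1) (by omega))).2
        rw [hcon] at hy
        rw [hcg.2] at hy
        simp at hy
      · have ht' : t = L := by omega
        subst ht'
        rw [hδend]
        intro hcon
        have := congrArg Prod.snd hcon
        simp only at this
        have := hcg.1.2.2.2
        omega
  -- parity is even along P
  have hmain : ∀ i ≤ K, cnt δ L (p i).1 (p i).2 % 2 = 0 := by
    intro i
    induction i with
    | zero =>
        intro _
        rw [hp0, cnt_left δ L _ (fun t ht => (hδcol t ht).1)]
    | succ i ih =>
        intro hi
        have hprev := ih (by omega)
        have hadj := hpadj i (by omega)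
        obtain ⟨hgia, hgib, hgic, hgid⟩ := (hPmem _ (hpmem i (by omega))).1
        obtain ⟨hgi1a, hgi1b, hgi1c, hgi1d⟩ := (hPmem _ (hpmem (i+1) hi)).1
        have hnei : ∀ t ≤ L, δ t ≠ p i := hδnotP _ (hpmem i (by omega))
        have hnei1 : ∀ t ≤ L, δ t ≠ p (i+1) := hδnotP _ (hpmem (i+1) hi)
        rcases hadj with ⟨hfst, hsnd⟩ | ⟨hsnd, hfst⟩
        · -- vertical step
          rcases hsnd with h | h
          · -- p i .2 = p (i+1) .2 + 1
            have e1 : ((p (i+1)).1, (p (i+1)).2) = p (i+1) := Prod.mk.eta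
            have e2 : ((p (i+1)).1, (p (i+1)).2 + 1) = p i := by
              rw [← hfst, ← h, Prod.mk.eta]
            have E := cnt_succ_row n δ L hstar hrow0 hrowL (p (i+1)).1 (p (i+1)).2
              hgi1c (by omega)
              (fun t ht => ⟨by rw [e1]; exact hnei1 t ht, by rw [e2]; exact hnei t ht⟩)
            rw [hfst, h] at hprev
            omega
          · -- p (i+1) .2 = p i .2 + 1
            have e1 : ((p i).1, (p i).2) = p i := Prod.mk.eta
            have e2 : ((p i).1, (p i).2 + 1) = p (i+1) := by
              rw [hfst, ← h, Prod.mk.eta]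
            have E := cnt_succ_row n δ L hstar hrow0 hrowL (p i).1 (p i).2
              hgic (by omega)
              (fun t ht => ⟨by rw [e1]; exact hnei t ht, by rw [e2]; exact hnei1 t ht⟩)
            rw [← hfst, h]
            omega
        · -- horizontal step
          rcases hfst with h | h
          · -- p i .1 = p (i+1) .1 + 1
            have e1 : ((p (i+1)).1, (p (i+1)).2) = p (i+1) := Prod.mk.eta
            have e2 : ((p (i+1)).1 + 1, (p (i+1)).2) = p i := by
              rw [← hsnd, ← h, Prod.mk.eta]
            have E := cnt_succ_col δ L hstar (p (i+1)).1 (p (i+1)).2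
              (fun t ht => ⟨by rw [e1]; exact hnei1 t ht, by rw [e2]; exact hnei t ht⟩)
            rw [h, hsnd] at hprev
            omega
          · -- p (i+1) .1 = p i .1 + 1
            have e1 : ((p i).1, (p i).2) = p i := Prod.mk.eta
            have e2 : ((p i).1 + 1, (p i).2) = p (i+1) := by
              rw [hsnd, ← h, Prod.mk.eta]
            have E := cnt_succ_col δ L hstar (p i).1 (p i).2
              (fun t ht => ⟨by rw [e1]; exact hnei t ht, by rw [e2]; exact hnei1 t ht⟩)
            rw [h, ← hsnd]
            omega
  -- but the parity at the right end is odd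
  obtain ⟨hgKa, hgKb, hgKc, hgKd⟩ := (hPmem _ (hpmem K le_rfl)).1
  have hodd := cnt_right n δ L hstar hrow0 hrowL m (p K).2
    hgKc (by omega)
    (fun t ht => (hδcol t ht).2)
    (fun t ht => by
      rw [show ((m : ℕ), (p K).2) = p K from ?_]
      · exact hδnotP _ (hpmem K le_rfl) t ht
      · rw [← hpK, Prod.mk.eta])
  have := hmain K le_rfl
  rw [hpK] at this
  omega

end Assembly

end CDaux


namespace CDwalk
set_option linter.unreachableTactic false
set_option linter.unusedTactic false

/-- Edge adjacency on ℤ × ℤ. -/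
def ZEdgeAdj (p q : ℤ × ℤ) : Prop :=
  (p.1 = q.1 ∧ (p.2 = q.2 + 1 ∨ q.2 = p.2 + 1)) ∨
  (p.2 = q.2 ∧ (p.1 = q.1 + 1 ∨ q.1 = p.1 + 1))

/-- Star adjacency on ℤ × ℤ. -/
def ZStarAdj (p q : ℤ × ℤ) : Prop :=
  p ≠ q ∧ p.1 ≤ q.1 + 1 ∧ q.1 ≤ p.1 + 1 ∧ p.2 ≤ q.2 + 1 ∧ q.2 ≤ p.2 + 1

inductive Dir : Type | N | E | S | W
deriving DecidableEq

open Dir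

def dvec : Dir → ℤ × ℤ
  | N => (0,1) | E => (1,0) | S => (0,-1) | W => (-1,0)

def dleft : Dir → Dir
  | N => W | W => S | S => E | E => N

def dright : Dir → Dir
  | N => E | E => S | S => W | W => N

def lcOff : Dir → ℤ × ℤ
  | N => (0,1) | E => (1,1) | S => (1,0) | W => (0,0)

def rcOff : Dir → ℤ × ℤ
  | N => (1,1) | E => (1,0) | S => (0,0) | W => (0,1)

def didx : Dir → ℕ
  | N => 0 | E => 1 | S => 2 | W => 3

lemma didx_inj : ∀ d d', didx d = didx d' → d = d' := by
  intro d d'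
  cases d <;> cases d' <;> simp [didx]

lemma dright_dleft (d : Dir) : dright (dleft d) = d := by cases d <;> rfl
lemma dleft_dright (d : Dir) : dleft (dright d) = d := by cases d <;> rfl

/-- Walk states: a vertex together with a direction (the directed lattice edge
from `v` to `v + dvec d`). -/
abbrev St := (ℤ × ℤ) × Dir

def hd (s : St) : ℤ × ℤ := s.1 + dvec s.2
def lc (s : St) : ℤ × ℤ := s.1 + lcOff s.2
def rc (s : St) : ℤ × ℤ := s.1 + rcOff s.2
def la (s : St) : ℤ × ℤ := lc s + dvec s.2
def ra (s : St) : ℤ × ℤ := rc s + dvec s.2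

section Geometry

variable (v : ℤ × ℤ) (d : Dir)

lemma geo_straight_lc : lc (v + dvec d, d) = la (v, d) := by
  cases d <;> simp [lc, la, dvec, lcOff, Prod.ext_iff] <;> ring_nf <;> omega

lemma geo_straight_rc : rc (v + dvec d, d) = ra (v, d) := by
  cases d <;> simp [rc, ra, lc, dvec, lcOff, rcOff, Prod.ext_iff] <;> ring_nf <;> omega

lemma geo_left_lc : lc (v + dvec d, dleft d) = lc (v, d) := by
  cases d <;> simp [lc, dvec, lcOff, dleft, Prod.ext_iff] <;> ring_nf <;> omega

lemma geo_left_rc : rc (v + dvec d, dleft d) = la (v, d) := by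
  cases d <;> simp [rc, la, lc, dvec, lcOff, rcOff, dleft, Prod.ext_iff] <;> ring_nf <;> omega

lemma geo_right_lc : lc (v + dvec d, dright d) = ra (v, d) := by
  cases d <;> simp [lc, ra, rc, dvec, lcOff, rcOff, dright, Prod.ext_iff] <;> ring_nf <;> omega

lemma geo_right_rc : rc (v + dvec d, dright d) = rc (v, d) := by
  cases d <;> simp [rc, dvec, lcOff, rcOff, dright, Prod.ext_iff] <;> ring_nf <;> omega

lemma geo_lc_sub_left : lc (v, d) - dvec (dleft d) = rc (v, d) := by
  cases d <;> simp [lc, rc, dvec, lcOff, rcOff, dleft, Prod.ext_iff] <;> ring_nf <;> omega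

lemma geo_rc_sub_right : rc (v, d) - dvec (dright d) = lc (v, d) := by
  cases d <;> simp [lc, rc, dvec, lcOff, rcOff, dright, Prod.ext_iff] <;> ring_nf <;> omega

lemma geo_ra_sub_right : ra (v, d) - dvec (dright d) = la (v, d) := by
  cases d <;> simp [ra, la, lc, rc, dvec, lcOff, rcOff, dright, Prod.ext_iff] <;> ring_nf <;> omega

lemma geo_edge_lc_la : ZEdgeAdj (lc (v, d)) (la (v, d)) := by
  cases d <;> simp [lc, la, dvec, lcOff, ZEdgeAdj, Prod.ext_iff] <;> omega

lemma geo_edge_la_ra : ZEdgeAdj (la (v, d)) (ra (v, d)) := by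
  cases d <;> simp [la, ra, lc, rc, dvec, lcOff, rcOff, ZEdgeAdj, Prod.ext_iff] <;> omega

lemma geo_star_rc_ra : ZStarAdj (rc (v, d)) (ra (v, d)) := by
  cases d <;>
    simp only [rc, ra, dvec, rcOff, ZStarAdj, ne_eq, Prod.ext_iff, Prod.fst_add,
      Prod.snd_add, not_and] <;>
  constructor <;> first
    | omega
    | (intro h; omega)

lemma geo_star_rc_la : ZStarAdj (rc (v, d)) (la (v, d)) := by
  cases d <;>
    simp only [rc, la, lc, dvec, lcOff, rcOff, ZStarAdj, ne_eq, Prod.ext_iff, Prod.fst_add,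
      Prod.snd_add, not_and] <;>
  constructor <;> first
    | omega
    | (intro h; omega)

end Geometry

section Walk

variable (m n : ℕ) (color : ℕ × ℕ → Bool)

/-- The extended domain of cells: `[0, m+1] × [0, n+1]`. -/
def inD (c : ℤ × ℤ) : Prop :=
  0 ≤ c.1 ∧ c.1 ≤ m + 1 ∧ 0 ≤ c.2 ∧ c.2 ≤ n + 1

instance (c : ℤ × ℤ) : Decidable (inD m n c) := by unfold inD; infer_instance

/-- The extended colouring: the given colouring inside the grid, blue side
strips (with blue bottom corners), yellow top/bottom strips (with yellow top
corners). -/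
def CC (c : ℤ × ℤ) : Bool :=
  if 1 ≤ c.1 ∧ c.1 ≤ m ∧ 1 ≤ c.2 ∧ c.2 ≤ n then color (c.1.toNat, c.2.toNat)
  else decide ((c.1 = 0 ∨ c.1 = m + 1) ∧ 0 ≤ c.2 ∧ c.2 ≤ n)

/-- The walk invariant: the cell on the left of the directed edge is blue and
in the domain, the cell on the right is yellow and in the domain. -/
def Inv (s : St) : Prop :=
  inD m n (lc s) ∧ inD m n (rc s) ∧ CC m n color (lc s) = true ∧ CC m n color (rc s) = false

/-- One step of the interface walk. -/
def step (s : St) : Option St :=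
  if inD m n (la s) ∧ inD m n (ra s) then
    some (hd s,
      if CC m n color (la s) = false then dleft s.2
      else if CC m n color (ra s) = true then dright s.2
      else s.2)
  else none

lemma step_cases {s t : St} (h : step m n color s = some t) :
    t.1 = hd s ∧ inD m n (la s) ∧ inD m n (ra s) ∧
    ((t.2 = dleft s.2 ∧ CC m n color (la s) = false)
      ∨ (t.2 = s.2 ∧ CC m n color (la s) = true ∧ CC m n color (ra s) = false)
      ∨ (t.2 = dright s.2 ∧ CC m n color (la s) = true ∧ CC m n color (ra s) = true)) := by
  unfold step at h
  split at h
  case isFalse => exact absurd h (by simp)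
  case isTrue hgate =>
    have ht : t = (hd s,
        if CC m n color (la s) = false then dleft s.2
        else if CC m n color (ra s) = true then dright s.2
        else s.2) := (Option.some.inj h).symm
    refine ⟨by rw [ht], hgate.1, hgate.2, ?_⟩
    by_cases hla : CC m n color (la s) = false
    · left; rw [ht]; simp [hla]
    · rw [Bool.not_eq_false] at hla
      by_cases hra : CC m n color (ra s) = true
      · right; right; rw [ht]; simp [hla, hra]
      · rw [Bool.not_eq_true] at hra
        right; left; rw [ht]; simp [hla, hra]

/-- The invariant is preserved by a step. -/
lemma step_inv {s t : St} (hInv : Inv m n color s) (h : step m n color s = some t) :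
    Inv m n color t := by
  obtain ⟨h1, h2, h3, h4⟩ := hInv
  obtain ⟨ht1, hla, hra, hcase⟩ := step_cases m n color h
  obtain ⟨v, d⟩ := s
  have htt : t = (v + dvec d, t.2) := by
    rw [Prod.ext_iff]
    exact ⟨ht1, rfl⟩
  rcases hcase with ⟨hd2, hc⟩ | ⟨hd2, hc1, hc2⟩ | ⟨hd2, hc1, hc2⟩
  · rw [htt, hd2]
    refine ⟨?_, ?_, ?_, ?_⟩ <;>
      rw [show ((v + dvec d, dleft d) : St) = (v + dvec d, dleft d) from rfl] <;>
      first
        | (rw [geo_left_lc]; assumption)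
        | (rw [geo_left_rc]; assumption)
  · rw [htt, hd2]
    exact ⟨by rw [geo_straight_lc]; exact hla, by rw [geo_straight_rc]; exact hra,
      by rw [geo_straight_lc]; exact hc1, by rw [geo_straight_rc]; exact hc2⟩
  · rw [htt, hd2]
    exact ⟨by rw [geo_right_lc]; exact hra, by rw [geo_right_rc]; exact h2,
      by rw [geo_right_lc]; exact hc2, by rw [geo_right_rc]; exact h4⟩

/-- Blue reachability relation. -/
def rB (c c' : ℤ × ℤ) : Prop := ZEdgeAdj c c' ∧ inD m n c' ∧ CC m n color c' = true

/-- Yellow reachability relation. -/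
def rY (c c' : ℤ × ℤ) : Prop := ZStarAdj c c' ∧ inD m n c' ∧ CC m n color c' = false

lemma step_reach_blue {s t : St} (hInv : Inv m n color s) (h : step m n color s = some t) :
    Relation.ReflTransGen (rB m n color) (lc s) (lc t) := by
  obtain ⟨ht1, hla, hra, hcase⟩ := step_cases m n color h
  obtain ⟨v, d⟩ := s
  have htt : t = (v + dvec d, t.2) := by
    rw [Prod.ext_iff]; exact ⟨ht1, rfl⟩
  rcases hcase with ⟨hd2, hc⟩ | ⟨hd2, hc1, hc2⟩ | ⟨hd2, hc1, hc2⟩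
  · rw [htt, hd2, geo_left_lc]
  · rw [htt, hd2, geo_straight_lc]
    exact Relation.ReflTransGen.single ⟨geo_edge_lc_la v d, hla, hc1⟩
  · rw [htt, hd2, geo_right_lc]
    exact Relation.ReflTransGen.head ⟨geo_edge_lc_la v d, hla, hc1⟩
      (Relation.ReflTransGen.single ⟨geo_edge_la_ra v d, hra, hc2⟩)

lemma step_reach_yellow {s t : St} (hInv : Inv m n color s) (h : step m n color s = some t) :
    Relation.ReflTransGen (rY m n color) (rc s) (rc t) := by
  obtain ⟨ht1, hla, hra, hcase⟩ := step_cases m n color h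
  obtain ⟨v, d⟩ := s
  have htt : t = (v + dvec d, t.2) := by
    rw [Prod.ext_iff]; exact ⟨ht1, rfl⟩
  rcases hcase with ⟨hd2, hc⟩ | ⟨hd2, hc1, hc2⟩ | ⟨hd2, hc1, hc2⟩
  · rw [htt, hd2, geo_left_rc]
    exact Relation.ReflTransGen.single ⟨geo_star_rc_la v d, hla, hc⟩
  · rw [htt, hd2, geo_straight_rc]
    exact Relation.ReflTransGen.single ⟨geo_star_rc_ra v d, hra, hc2⟩
  · rw [htt, hd2, geo_right_rc]

/-- The direction of the predecessor of `t` is determined by `t` and the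
colours of the two cells behind it. -/
lemma dir_det {s t : St} (hInv : Inv m n color s) (h : step m n color s = some t) :
    s.2 = (if CC m n color (lc t - dvec t.2) = false then dright t.2
      else if CC m n color (rc t - dvec t.2) = true then dleft t.2
      else t.2) := by
  obtain ⟨h1, h2, h3, h4⟩ := hInv
  obtain ⟨ht1, hla, hra, hcase⟩ := step_cases m n color h
  obtain ⟨v, d⟩ := s
  have htt : t = (v + dvec d, t.2) := by
    rw [Prod.ext_iff]; exact ⟨ht1, rfl⟩
  rcases hcase with ⟨hd2, hc⟩ | ⟨hd2, hc1, hc2⟩ | ⟨hd2, hc1, hc2⟩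
  · have e1 : lc t - dvec t.2 = rc (v, d) := by
      rw [htt, hd2, geo_left_lc, geo_lc_sub_left]
    rw [e1, hd2, if_pos h4, dright_dleft]
  · have e1 : lc t - dvec t.2 = lc (v, d) := by
      rw [htt, hd2, geo_straight_lc]
      unfold la
      exact add_sub_cancel_right _ _
    have e2 : rc t - dvec t.2 = rc (v, d) := by
      rw [htt, hd2, geo_straight_rc]
      unfold ra
      exact add_sub_cancel_right _ _
    rw [e1, e2, hd2, if_neg (by rw [h3]; simp), if_neg (by rw [h4]; simp)]
  · have e1 : lc t - dvec t.2 = la (v, d) := by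
      rw [htt, hd2, geo_right_lc, geo_ra_sub_right]
    have e2 : rc t - dvec t.2 = lc (v, d) := by
      rw [htt, hd2, geo_right_rc, geo_rc_sub_right]
    rw [e1, e2, hd2, if_neg (by rw [hc1]; simp), if_pos h3, dleft_dright]

/-- Backward uniqueness of the walk. -/
lemma step_inj {s s' t : St} (hInv : Inv m n color s) (hInv' : Inv m n color s')
    (h : step m n color s = some t) (h' : step m n color s' = some t) : s = s' := by
  have hd1 := dir_det m n color hInv h
  have hd2 := dir_det m n color hInv' h'
  have hdir : s.2 = s'.2 := by rw [hd1, hd2]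
  have hv : s.1 = s'.1 := by
    have e1 := (step_cases m n color h).1
    have e2 := (step_cases m n color h').1
    unfold hd at e1 e2
    have : s.1 + dvec s.2 = s'.1 + dvec s'.2 := by rw [← e1, ← e2]
    rw [hdir] at this
    exact add_right_cancel this
  exact Prod.ext hv hdir

/-- The starting state: the edge from `(0,-1)` to `(0,0)`, with the blue cell
`(0,0)` on its left and the yellow cell `(1,0)` on its right. -/
def s0 : St := (((0 : ℤ), (-1 : ℤ)), Dir.N)

lemma lc_s0 : lc s0 = (0, 0) := by
  simp [lc, s0, lcOff, Prod.ext_iff]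

lemma rc_s0 : rc s0 = (1, 0) := by
  simp [rc, s0, rcOff, Prod.ext_iff]

lemma inv_s0 (hm : 1 ≤ m) (hn : 1 ≤ n) : Inv m n color s0 := by
  refine ⟨?_, ?_, ?_, ?_⟩
  · rw [lc_s0]; exact ⟨by norm_num, by norm_num; omega, by norm_num, by norm_num; omega⟩
  · rw [rc_s0]; refine ⟨by norm_num, ?_, by norm_num, ?_⟩ <;> simp <;> omega
  · rw [lc_s0]
    unfold CC
    rw [if_neg (by norm_num)]
    simp only [decide_eq_true_eq]
    norm_num
  · rw [rc_s0]
    unfold CC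
    rw [if_neg (by norm_num)]
    simp only [decide_eq_false_iff_not]
    push_neg
    intro hor
    rcases hor with h | h
    · norm_num at h
    · exfalso
      have : (m : ℤ) + 1 = 1 := h.symm
      omega

/-- The starting state has no predecessor. -/
lemma no_pred (hm : 1 ≤ m) {s : St} (hInv : Inv m n color s)
    (h : step m n color s = some s0) : False := by
  obtain ⟨h1, h2, h3, h4⟩ := hInv
  have ht1 := (step_cases m n color h).1
  obtain ⟨v, d⟩ := s
  unfold hd at ht1
  have hv1 : v.1 + (dvec d).1 = 0 := by
    have := congrArg Prod.fst ht1
    simpa [s0] using this.symm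
  have hv2 : v.2 + (dvec d).2 = -1 := by
    have := congrArg Prod.snd ht1
    simpa [s0] using this.symm
  cases d
  · -- N : v = (0,-2), lc s = (0,-1) not in D
    simp only [dvec] at hv1 hv2
    have hlc : lc (v, N) = (v.1, v.2 + 1) := by
      simp [lc, lcOff, Prod.ext_iff]
    rw [hlc] at h1
    obtain ⟨-, -, c3, -⟩ := h1
    simp only at c3
    omega
  · -- E : v = (-1,-1), rc s = (0,-1) not in D
    simp only [dvec] at hv1 hv2
    have hrc : rc (v, E) = (v.1 + 1, v.2) := by
      simp [rc, rcOff, Prod.ext_iff]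
    rw [hrc] at h2
    obtain ⟨-, -, c3, -⟩ := h2
    simp only at c3
    omega
  · -- S : v = (0,0), lc s = (1,0) which is yellow
    simp only [dvec] at hv1 hv2
    have hvv1 : v.1 = 0 := by omega
    have hvv2 : v.2 = 0 := by omega
    have hlc : lc (v, S) = (1, 0) := by
      simp [lc, lcOff, Prod.ext_iff]
      omega
    rw [hlc] at h3
    unfold CC at h3
    rw [if_neg (by norm_num)] at h3
    simp only [decide_eq_true_eq] at h3
    obtain ⟨hor, -⟩ := h3
    rcases hor with hh | hh
    · norm_num at hh
    · omega
  · -- W : v = (1,-1), lc s = (1,-1) not in D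
    simp only [dvec] at hv1 hv2
    have hlc : lc (v, W) = (v.1, v.2) := by
      simp [lc, lcOff, Prod.ext_iff]
    rw [hlc] at h1
    obtain ⟨-, -, c3, -⟩ := h1
    simp only at c3
    omega

/-- Classification of the stopping states. -/
lemma stop_classify {s : St} (hInv : Inv m n color s)
    (h : step m n color s = none) :
    s = ((((m : ℤ), 0), Dir.S) : St) ∨ s = ((((0 : ℤ), (n : ℤ)), Dir.W) : St) := by
  obtain ⟨h1, h2, h3, h4⟩ := hInv
  have hgate : ¬ (inD m n (la s) ∧ inD m n (ra s)) := by
    intro hc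
    unfold step at h
    rw [if_pos hc] at h
    simp at h
  obtain ⟨v, d⟩ := s
  cases d
  · -- heading N : impossible
    exfalso
    have hla : la (v, N) = (v.1, v.2 + 2) := by
      simp [la, lc, lcOff, dvec, Prod.ext_iff]; ring
    have hra : ra (v, N) = (v.1 + 1, v.2 + 2) := by
      simp [ra, rc, rcOff, dvec, Prod.ext_iff]; ring
    have hlc : lc (v, N) = (v.1, v.2 + 1) := by
      simp [lc, lcOff, Prod.ext_iff]
    have hrc : rc (v, N) = (v.1 + 1, v.2 + 1) := by
      simp [rc, rcOff, Prod.ext_iff]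
    rw [hlc] at h1 h3
    rw [hrc] at h2
    unfold inD at h1 h2
    simp only at h1 h2
    have hrow : v.2 + 1 = n + 1 := by
      rcases not_and_or.mp hgate with hc | hc
      · rw [hla] at hc
        unfold inD at hc
        simp only at hc
        omega
      · rw [hra] at hc
        unfold inD at hc
        simp only at hc
        omega
    unfold CC at h3
    rw [if_neg (by omega)] at h3
    simp only [decide_eq_true_eq] at h3
    omega
  · -- heading E : impossible
    exfalso
    have hla : la (v, E) = (v.1 + 2, v.2 + 1) := by
      simp [la, lc, lcOff, dvec, Prod.ext_iff]; ring
    have hra : ra (v, E) = (v.1 + 2, v.2) := by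
      simp [ra, rc, rcOff, dvec, Prod.ext_iff]; ring
    have hlc : lc (v, E) = (v.1 + 1, v.2 + 1) := by
      simp [lc, lcOff, Prod.ext_iff]
    have hrc : rc (v, E) = (v.1 + 1, v.2) := by
      simp [rc, rcOff, Prod.ext_iff]
    rw [hlc] at h1
    rw [hrc] at h2 h4
    unfold inD at h1 h2
    simp only at h1 h2
    have hcol : v.1 + 1 = m + 1 := by
      rcases not_and_or.mp hgate with hc | hc
      · rw [hla] at hc
        unfold inD at hc
        simp only at hc
        omega
      · rw [hra] at hc
        unfold inD at hc
        simp only at hc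
        omega
    unfold CC at h4
    rw [if_neg (by omega)] at h4
    simp only [decide_eq_false_iff_not] at h4
    push_neg at h4
    have hv2 : v.2 = n + 1 := by
      have := h4 (Or.inr (by omega))
      omega
    omega
  · -- heading S : bottom-right exit
    left
    have hla : la (v, S) = (v.1 + 1, v.2 - 1) := by
      simp [la, lc, lcOff, dvec, Prod.ext_iff]; ring
    have hra : ra (v, S) = (v.1, v.2 - 1) := by
      simp [ra, rc, rcOff, dvec, Prod.ext_iff]; ring
    have hlc : lc (v, S) = (v.1 + 1, v.2) := by
      simp [lc, lcOff, Prod.ext_iff]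
    have hrc : rc (v, S) = (v.1, v.2) := by
      simp [rc, rcOff, Prod.ext_iff]
    rw [hlc] at h1 h3
    rw [hrc] at h2
    unfold inD at h1 h2
    simp only at h1 h2
    have hrow : v.2 = 0 := by
      rcases not_and_or.mp hgate with hc | hc
      · rw [hla] at hc
        unfold inD at hc
        simp only at hc
        omega
      · rw [hra] at hc
        unfold inD at hc
        simp only at hc
        omega
    unfold CC at h3
    rw [if_neg (by omega)] at h3
    simp only [decide_eq_true_eq] at h3
    obtain ⟨hor, -⟩ := h3
    have hv1 : v.1 = m := by
      rcases hor with hh | hh <;> omega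
    rw [Prod.ext_iff, Prod.ext_iff]
    exact ⟨⟨by simp [hv1], by simp [hrow]⟩, rfl⟩
  · -- heading W : top-left exit
    right
    have hla : la (v, W) = (v.1 - 1, v.2) := by
      simp [la, lc, lcOff, dvec, Prod.ext_iff]; ring
    have hra : ra (v, W) = (v.1 - 1, v.2 + 1) := by
      simp [ra, rc, rcOff, dvec, Prod.ext_iff]; constructor <;> ring
    have hlc : lc (v, W) = (v.1, v.2) := by
      simp [lc, lcOff, Prod.ext_iff]
    have hrc : rc (v, W) = (v.1, v.2 + 1) := by
      simp [rc, rcOff, Prod.ext_iff]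
    rw [hlc] at h1 h3
    rw [hrc] at h2 h4
    unfold inD at h1 h2
    simp only at h1 h2
    have hcol : v.1 = 0 := by
      rcases not_and_or.mp hgate with hc | hc
      · rw [hla] at hc
        unfold inD at hc
        simp only at hc
        omega
      · rw [hra] at hc
        unfold inD at hc
        simp only at hc
        omega
    unfold CC at h4
    rw [if_neg (by omega)] at h4
    simp only [decide_eq_false_iff_not] at h4
    push_neg at h4
    have hup : v.2 + 1 > n := by
      have := h4 (Or.inl (by omega))
      omega
    unfold CC at h3
    rw [if_neg (by omega)] at h3
    simp only [decide_eq_true_eq] at h3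
    obtain ⟨-, -, hv2⟩ := h3
    have hv2' : v.2 = n := by omega
    rw [Prod.ext_iff, Prod.ext_iff]
    exact ⟨⟨by simp [hcol], by simp [hv2']⟩, rfl⟩

/-- The orbit of the walk. -/
def orb : ℕ → Option St
  | 0 => some s0
  | (k+1) => (orb k).bind (step m n color)

lemma orb_succ_some {k : ℕ} {t : St} (h : orb m n color (k+1) = some t) :
    ∃ s, orb m n color k = some s ∧ step m n color s = some t := by
  unfold orb at h
  cases hk : orb m n color k with
  | none => rw [hk] at h; simp at h
  | some s => rw [hk] at h; exact ⟨s, rfl, h⟩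

lemma orb_inv (hm : 1 ≤ m) (hn : 1 ≤ n) :
    ∀ k s, orb m n color k = some s → Inv m n color s := by
  intro k
  induction k with
  | zero =>
      intro s h
      unfold orb at h
      rw [Option.some.inj h.symm]
      exact inv_s0 m n color hm hn
  | succ k ih =>
      intro s h
      obtain ⟨s', h1, h2⟩ := orb_succ_some m n color h
      exact step_inv m n color (ih s' h1) h2

lemma orb_distinct (hm : 1 ≤ m) (hn : 1 ≤ n) :
    ∀ i j s, i < j → orb m n color i = some s → orb m n color j = some s → False := by
  intro i
  induction i with
  | zero =>
      intro j s hij h0 hj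
      have hs : s = s0 := by
        unfold orb at h0
        exact (Option.some.inj h0).symm
      subst hs
      obtain ⟨j', rfl⟩ : ∃ j', j = j' + 1 := ⟨j - 1, by omega⟩
      obtain ⟨s', h1, h2⟩ := orb_succ_some m n color hj
      exact no_pred m n color hm (orb_inv m n color hm hn j' s' h1) h2
  | succ i ih =>
      intro j s hij hi hj
      obtain ⟨j', rfl⟩ : ∃ j', j = j' + 1 := ⟨j - 1, by omega⟩
      obtain ⟨sa, ha1, ha2⟩ := orb_succ_some m n color hi
      obtain ⟨sb, hb1, hb2⟩ := orb_succ_some m n color hj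
      have : sa = sb := step_inj m n color
        (orb_inv m n color hm hn i sa ha1) (orb_inv m n color hm hn j' sb hb1) ha2 hb2
      subst this
      exact ih j' sa (by omega) ha1 hb1

/-- The walk terminates. -/
lemma exists_stop (hm : 1 ≤ m) (hn : 1 ≤ n) :
    ∃ k s, orb m n color k = some s ∧ step m n color s = none := by
  by_contra hcon
  push_neg at hcon
  have hall : ∀ k, ∃ s, orb m n color k = some s := by
    intro k
    induction k with
    | zero => exact ⟨s0, rfl⟩
    | succ k ih =>
        obtain ⟨s, hs⟩ := ih
        obtain ⟨t, ht⟩ := Option.ne_none_iff_exists'.mp (hcon k s hs)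
        exact ⟨t, by unfold orb; rw [hs]; exact ht⟩
  set T : Finset ((ℤ × ℤ) × ℕ) :=
    (Finset.Icc ((-1 : ℤ), (-1 : ℤ)) ((m : ℤ) + 1, (n : ℤ) + 1)) ×ˢ Finset.range 4 with hT
  set f : ℕ → (ℤ × ℤ) × ℕ := fun k =>
    (((orb m n color k).getD s0).1, didx ((orb m n color k).getD s0).2) with hf
  have hmaps : ∀ k ∈ Finset.range (T.card + 1), f k ∈ T := by
    intro k _
    obtain ⟨s, hs⟩ := hall k
    have hInv := orb_inv m n color hm hn k s hs
    obtain ⟨h1, h2, -, -⟩ := hInv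
    rw [hf]
    simp only [hs, Option.getD_some]
    rw [hT, Finset.mem_product, Finset.mem_Icc, Finset.mem_range]
    obtain ⟨v, d⟩ := s
    unfold inD at h1 h2
    unfold lc at h1
    unfold rc at h2
    refine ⟨⟨?_, ?_⟩, ?_⟩
    · rw [Prod.mk_le_mk]
      constructor <;> simp only [Prod.fst_add, Prod.snd_add] at h1 h2 <;>
        cases d <;> simp [lcOff, rcOff] at h1 h2 ⊢ <;> omega
    · rw [Prod.mk_le_mk]
      constructor <;> simp only [Prod.fst_add, Prod.snd_add] at h1 h2 <;>
        cases d <;> simp [lcOff, rcOff] at h1 h2 ⊢ <;> omega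
    · cases d <;> simp [didx]
  have hcard : T.card < (Finset.range (T.card + 1)).card := by
    rw [Finset.card_range]; omega
  obtain ⟨i, -, j, -, hij, hfij⟩ :=
    Finset.exists_ne_map_eq_of_card_lt_of_maps_to hcard hmaps
  obtain ⟨si, hsi⟩ := hall i
  obtain ⟨sj, hsj⟩ := hall j
  have hs_eq : si = sj := by
    rw [hf] at hfij
    simp only [hsi, hsj, Option.getD_some] at hfij
    have e1 := congrArg Prod.fst hfij
    have e2 := congrArg Prod.snd hfij
    simp only at e1 e2
    exact Prod.ext e1 (didx_inj _ _ e2)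
  rcases lt_or_gt_of_ne hij with h | h
  · exact orb_distinct m n color hm hn i j si h hsi (hs_eq ▸ hsj)
  · exact orb_distinct m n color hm hn j i si h (hs_eq ▸ hsj) hsi

/-- Along the orbit, the left cell is blue-reachable from `(0,0)` and the right
cell is yellow-reachable from `(1,0)`. -/
lemma orb_reach (hm : 1 ≤ m) (hn : 1 ≤ n) :
    ∀ k s, orb m n color k = some s →
      Relation.ReflTransGen (rB m n color) (0, 0) (lc s) ∧
      Relation.ReflTransGen (rY m n color) (1, 0) (rc s) := by
  intro k
  induction k with
  | zero =>
      intro s h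
      unfold orb at h
      rw [Option.some.inj h.symm]
      rw [lc_s0, rc_s0]
      exact ⟨Relation.ReflTransGen.refl, Relation.ReflTransGen.refl⟩
  | succ k ih =>
      intro s h
      obtain ⟨s', h1, h2⟩ := orb_succ_some m n color h
      have hInv' := orb_inv m n color hm hn k s' h1
      obtain ⟨ihB, ihY⟩ := ih s' h1
      exact ⟨ihB.trans (step_reach_blue m n color hInv' h2),
        ihY.trans (step_reach_yellow m n color hInv' h2)⟩

end Walk

section Extraction

/-- Turn reflexive-transitive reachability into an indexed path. -/
lemma rtg_fn {α : Type*} {r : α → α → Prop} {a b : α} (h : Relation.ReflTransGen r a b) :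
    ∃ (L : ℕ) (g : ℕ → α), g 0 = a ∧ g L = b ∧ ∀ i < L, r (g i) (g (i+1)) := by
  induction h with
  | refl => exact ⟨0, fun _ => a, rfl, rfl, by omega⟩
  | @tail b' c hab hbc ih =>
      obtain ⟨L, g, h0, hL, hstep⟩ := ih
      refine ⟨L + 1, fun i => if i ≤ L then g i else c, by simp [h0], by simp, ?_⟩
      intro i hi
      by_cases hiL : i < L
      · simp only [if_pos (by omega : i ≤ L), if_pos (by omega : i + 1 ≤ L)]
        exact hstep i hiL
      · have : i = L := by omega
        subst this
        simp only [if_pos le_rfl, if_neg (by omega : ¬ (i + 1 ≤ i))]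
        rw [hL]
        exact hbc

/-- Trim an indexed path whose `meas` goes from `0` to `M+1` in steps of at
most `1` to a segment going from `1` to `M` staying in `[1, M]`. -/
lemma trim (g : ℕ → ℤ × ℤ) (Lf M : ℕ) (hM : 1 ≤ M) (meas : ℤ × ℤ → ℤ)
    (hadj : ∀ i < Lf, meas (g (i+1)) ≤ meas (g i) + 1 ∧ meas (g i) ≤ meas (g (i+1)) + 1)
    (h0 : meas (g 0) = 0) (hL : meas (g Lf) = (M : ℤ) + 1) :
    ∃ a b, a ≤ b ∧ b ≤ Lf ∧ meas (g a) = 1 ∧ meas (g b) = (M : ℤ) ∧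
      ∀ i, a ≤ i → i ≤ b → 1 ≤ meas (g i) ∧ meas (g i) ≤ (M : ℤ) := by
  have hex : ∃ k, k ≤ Lf ∧ (M : ℤ) + 1 ≤ meas (g k) := ⟨Lf, le_rfl, by rw [hL]⟩
  classical
  set k := Nat.find hex with hk
  obtain ⟨hkLf, hkge⟩ := Nat.find_spec hex
  rw [← hk] at hkLf hkge
  have hmin : ∀ i < k, meas (g i) < (M : ℤ) + 1 := by
    intro i hi
    have hne := Nat.find_min hex (show i < Nat.find hex by rw [← hk]; omega)
    push_neg at hne
    exact hne (by omega)
  have hk1 : 1 ≤ k := by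
    by_contra hcon
    have hk0 : k = 0 := by omega
    rw [hk0, h0] at hkge
    omega
  have hex2 : ∃ t, meas (g (k - 1 - t)) ≤ 0 := ⟨k - 1, by
    rw [show k - 1 - (k - 1) = 0 by omega, h0]⟩
  set jt := Nat.find hex2 with hjt
  set j := k - 1 - jt with hj
  have hjle : meas (g j) ≤ 0 := by
    rw [hj, hjt]
    exact Nat.find_spec hex2
  have hjtle : jt ≤ k - 1 := by
    rw [hjt]
    exact Nat.find_min' hex2 (by rw [show k - 1 - (k - 1) = 0 by omega, h0])
  have hjmin : ∀ i, j < i → i ≤ k - 1 → 1 ≤ meas (g i) := by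
    intro i h1 h2
    have := Nat.find_min hex2 (show k - 1 - i < Nat.find hex2 by rw [← hjt]; omega)
    rw [show k - 1 - (k - 1 - i) = i by omega] at this
    omega
  have hab : j + 1 ≤ k - 1 := by
    by_contra hcon
    have hjk : j + 1 = k := by omega
    have := (hadj j (by omega)).1
    rw [hjk] at this
    omega
  refine ⟨j + 1, k - 1, hab, by omega, ?_, ?_, ?_⟩
  · have hge := hjmin (j+1) (by omega) hab
    have := (hadj j (by omega)).1
    omega
  · have hle : meas (g (k-1)) < (M : ℤ) + 1 := hmin (k-1) (by omega)
    have := (hadj (k-1) (by omega)).1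
    rw [show k - 1 + 1 = k by omega] at this
    omega
  · intro i h1 h2
    exact ⟨hjmin i (by omega) h2, by have := hmin i (by omega); omega⟩

end Extraction

section Convert

variable (m n : ℕ) (color : ℕ × ℕ → Bool)

lemma z2n_edge {c c' : ℤ × ℤ} (hc : inD m n c) (hc' : inD m n c') (h : ZEdgeAdj c c') :
    EdgeAdj (c.1.toNat, c.2.toNat) (c'.1.toNat, c'.2.toNat) := by
  unfold inD at hc hc'
  unfold ZEdgeAdj at h
  unfold EdgeAdj
  simp only
  omega

lemma z2n_star {c c' : ℤ × ℤ} (hc : inD m n c) (hc' : inD m n c') (h : ZStarAdj c c') :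
    StarAdj (c.1.toNat, c.2.toNat) (c'.1.toNat, c'.2.toNat) := by
  unfold inD at hc hc'
  obtain ⟨hne, h1, h2, h3, h4⟩ := h
  simp only [ne_eq, Prod.ext_iff, not_and_or] at hne
  refine ⟨?_, by simp; omega, by simp; omega, by simp; omega, by simp; omega⟩
  intro hcon
  rw [Prod.ext_iff] at hcon
  simp only at hcon
  rcases hne with hh | hh <;> [exact hh (by omega); exact hh (by omega)]

lemma blue_cell_grid {c : ℤ × ℤ} (hD : inD m n c) (hC : CC m n color c = true)
    (h1 : 1 ≤ c.1) (h2 : c.1 ≤ (m : ℤ)) :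
    InGrid m n (c.1.toNat, c.2.toNat) ∧ color (c.1.toNat, c.2.toNat) = true := by
  unfold CC at hC
  by_cases hg : 1 ≤ c.1 ∧ c.1 ≤ (m : ℤ) ∧ 1 ≤ c.2 ∧ c.2 ≤ (n : ℤ)
  · rw [if_pos hg] at hC
    refine ⟨⟨by simp; omega, by simp; omega, by simp; omega, by simp; omega⟩, hC⟩
  · rw [if_neg hg] at hC
    simp only [decide_eq_true_eq] at hC
    obtain ⟨hor, -⟩ := hC
    rcases hor with hh | hh <;> omega

lemma yellow_cell_grid {c : ℤ × ℤ} (hD : inD m n c) (hC : CC m n color c = false)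
    (h1 : 1 ≤ c.2) (h2 : c.2 ≤ (n : ℤ)) :
    InGrid m n (c.1.toNat, c.2.toNat) ∧ color (c.1.toNat, c.2.toNat) = false := by
  unfold inD at hD
  unfold CC at hC
  by_cases hg : 1 ≤ c.1 ∧ c.1 ≤ (m : ℤ) ∧ 1 ≤ c.2 ∧ c.2 ≤ (n : ℤ)
  · rw [if_pos hg] at hC
    refine ⟨⟨by simp; omega, by simp; omega, by simp; omega, by simp; omega⟩, hC⟩
  · rw [if_neg hg] at hC
    simp only [decide_eq_false_iff_not] at hC
    exfalso
    have hcols : ¬ (c.1 = 0 ∨ c.1 = (m : ℤ) + 1) := fun hh => hC ⟨hh, by omega, by omega⟩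
    rw [not_or] at hcols
    exact hg ⟨by omega, by omega, h1, h2⟩

end Convert

theorem walk_at_least_one (m n : ℕ) (hm : 1 ≤ m) (hn : 1 ≤ n) (color : ℕ × ℕ → Bool) :
    BlueHorizCrossing m n color ∨ YellowVertCrossing m n color := by
  obtain ⟨k, sf, hk, hstop⟩ := exists_stop m n color hm hn
  have hInvf := orb_inv m n color hm hn k sf hk
  obtain ⟨hreachB, hreachY⟩ := orb_reach m n color hm hn k sf hk
  rcases stop_classify m n color hInvf hstop with hS | hW
  · -- bottom-right exit : blue crossing
    left
    have hlcf : lc sf = ((m : ℤ) + 1, 0) := by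
      rw [hS]; simp [lc, lcOff, Prod.ext_iff]
    rw [hlcf] at hreachB
    obtain ⟨Lf, g, hg0, hgL, hgstep⟩ := rtg_fn hreachB
    have hprop : ∀ i ≤ Lf, inD m n (g i) ∧ CC m n color (g i) = true := by
      intro i _
      cases i with
      | zero =>
          rw [hg0]
          have h := inv_s0 m n color hm hn
          refine ⟨?_, ?_⟩
          · have := h.1; rwa [lc_s0] at this
          · have := h.2.2.1; rwa [lc_s0] at this
      | succ i =>
          have := hgstep i (by omega)
          exact ⟨this.2.1, this.2.2⟩
    obtain ⟨a, b, hab, hbLf, hma, hmb, hmid⟩ := trim g Lf m hm Prod.fst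
      (fun i hi => by
        have h := (hgstep i hi).1
        unfold ZEdgeAdj at h
        omega)
      (by rw [hg0]) (by rw [hgL])
    refine ⟨(List.range (b - a + 1)).map
      (fun t => (((g (a+t)).1.toNat, (g (a+t)).2.toNat) : ℕ × ℕ)), by simp, ?_, ?_, ?_, ?_⟩
    · rw [show @List.Chain' (ℕ × ℕ) = List.IsChain from rfl, List.isChain_map]
      refine (List.isChain_range_succ _ _).mpr ?_
      intro t ht
      have hia : a + t < Lf := by omega
      have hz := (hgstep (a + t) hia).1
      have e1 := (hprop (a+t) (by omega)).1
      have e2 := (hprop (a+t+1) (by omega)).1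
      have := z2n_edge m n e1 e2 hz
      rwa [show a + (t+1) = a + t + 1 by omega]
    · intro pp hpp
      rw [List.mem_map] at hpp
      obtain ⟨t, htmem, rfl⟩ := hpp
      rw [List.mem_range] at htmem
      have hia : a + t ≤ b := by omega
      obtain ⟨hge, hle⟩ := hmid (a+t) (by omega) hia
      obtain ⟨hD, hC⟩ := hprop (a+t) (by omega)
      exact blue_cell_grid m n color hD hC hge hle
    · rw [List.range_succ_eq_map]
      simp only [List.map_cons, List.head?_cons, Option.map_some]
      have : (g (a + 0)).1 = 1 := by rw [Nat.add_zero, hma]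
      rw [this]
      rfl
    · rw [List.range_succ, List.map_append]
      simp only [List.map_cons, List.map_nil, List.getLast?_concat]
      have : (g (a + (b - a))).1 = (m : ℤ) := by rw [show a + (b - a) = b by omega, hmb]
      rw [Option.map_some]
      rw [this]
      simp
  · -- top-left exit : yellow crossing
    right
    have hrcf : rc sf = (0, (n : ℤ) + 1) := by
      rw [hW]; simp [rc, rcOff, Prod.ext_iff]
    rw [hrcf] at hreachY
    obtain ⟨Lf, g, hg0, hgL, hgstep⟩ := rtg_fn hreachY
    have hprop : ∀ i ≤ Lf, inD m n (g i) ∧ CC m n color (g i) = false := by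
      intro i _
      cases i with
      | zero =>
          rw [hg0]
          have h := inv_s0 m n color hm hn
          refine ⟨?_, ?_⟩
          · have := h.2.1; rwa [rc_s0] at this
          · have := h.2.2.2; rwa [rc_s0] at this
      | succ i =>
          have := hgstep i (by omega)
          exact ⟨this.2.1, this.2.2⟩
    obtain ⟨a, b, hab, hbLf, hma, hmb, hmid⟩ := trim g Lf n hn Prod.snd
      (fun i hi => by
        have h := (hgstep i hi).1
        obtain ⟨-, -, -, h3, h4⟩ := h
        omega)
      (by rw [hg0]) (by rw [hgL])
    refine ⟨(List.range (b - a + 1)).map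
      (fun t => (((g (a+t)).1.toNat, (g (a+t)).2.toNat) : ℕ × ℕ)), by simp, ?_, ?_, ?_, ?_⟩
    · rw [show @List.Chain' (ℕ × ℕ) = List.IsChain from rfl, List.isChain_map]
      refine (List.isChain_range_succ _ _).mpr ?_
      intro t ht
      have hia : a + t < Lf := by omega
      have hz := (hgstep (a + t) hia).1
      have e1 := (hprop (a+t) (by omega)).1
      have e2 := (hprop (a+t+1) (by omega)).1
      have := z2n_star m n e1 e2 hz
      rwa [show a + (t+1) = a + t + 1 by omega]
    · intro pp hpp
      rw [List.mem_map] at hpp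
      obtain ⟨t, htmem, rfl⟩ := hpp
      rw [List.mem_range] at htmem
      have hia : a + t ≤ b := by omega
      obtain ⟨hge, hle⟩ := hmid (a+t) (by omega) hia
      obtain ⟨hD, hC⟩ := hprop (a+t) (by omega)
      exact yellow_cell_grid m n color hD hC hge hle
    · rw [List.range_succ_eq_map]
      simp only [List.map_cons, List.head?_cons, Option.map_some]
      have : (g (a + 0)).2 = 1 := by rw [Nat.add_zero, hma]
      rw [this]
      rfl
    · rw [List.range_succ, List.map_append]
      simp only [List.map_cons, List.map_nil, List.getLast?_concat]
      have : (g (a + (b - a))).2 = (n : ℤ) := by rw [show a + (b - a) = b by omega, hmb]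
      rw [Option.map_some]
      rw [this]
      simp

end CDwalk


/-- Percolation crossing duality: exactly one of a blue left–right crossing and
a yellow top–bottom crossing occurs. -/
theorem crossing_duality (m n : ℕ) (hm : 1 ≤ m) (hn : 1 ≤ n)
    (color : ℕ × ℕ → Bool) :
    Xor' (BlueHorizCrossing m n color) (YellowVertCrossing m n color) := by
  have hnb := CDaux.not_both m n hm hn color
  rcases CDwalk.walk_at_least_one m n hm hn color with hB | hY
  · exact Or.inl ⟨hB, fun hY => hnb hB hY⟩
  · exact Or.inr ⟨hY, fun hB => hnb hB hY⟩
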